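/- For any a < b ≤ c < d in {1,…,n}, the crossing pair of mentions {[a,c],[b,d]} and the nested pair {[a,d],[b,c]} have identical separator sequences. -/

import Mathlib

inductive Marker | S | E | C
deriving DecidableEq

/-- Separator sequence of a set of mentions (intervals). Gap `k` lies between word `k` and word `k+1`. -/
def sep (M : Set (ℕ × ℕ)) (k : ℕ) : Set Marker :=
  {m | (m = Marker.S ∧ ∃ p ∈ M, p.1 = k + 1) ∨
       (m = Marker.E ∧ ∃ p ∈ M, p.2 = k) ∨
       (m = Marker.C ∧ ∃ p ∈ M, p.1 ≤ k ∧ k + 1 ≤ p.2)}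

/-- `M` is a set of mentions over a sentence of `n` words. -/
def Valid (n : ℕ) (M : Set (ℕ × ℕ)) : Prop :=
  ∀ p ∈ M, 1 ≤ p.1 ∧ p.1 ≤ p.2 ∧ p.2 ≤ n

/-! The separator sequence only sees which words start a mention, which words end one, and which
gaps lie inside one. For `a ≤ b ≤ c ≤ d` the crossing and the nested pair have the same starts
`{a, b}` and ends `{c, d}`, and in both cases the gaps inside a mention are exactly `a ≤ k < d`. -/

theorem sep_congr {M N : Set (ℕ × ℕ)} (hS : Prod.fst '' M = Prod.fst '' N)
    (hE : Prod.snd '' M = Prod.snd '' N)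
    (hC : ∀ k, (∃ p ∈ M, p.1 ≤ k ∧ k + 1 ≤ p.2) ↔ (∃ p ∈ N, p.1 ≤ k ∧ k + 1 ≤ p.2)) :
    sep M = sep N := by
  have hS' : ∀ k, (∃ p ∈ M, p.1 = k) ↔ (∃ p ∈ N, p.1 = k) := fun k => by
    simpa only [Set.mem_image] using Set.ext_iff.mp hS k
  have hE' : ∀ k, (∃ p ∈ M, p.2 = k) ↔ (∃ p ∈ N, p.2 = k) := fun k => by
    simpa only [Set.mem_image] using Set.ext_iff.mp hE k
  funext k
  ext m
  simp only [sep, Set.mem_ofPred_eq, hS', hE', hC]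

theorem crossing_covers_iff_nested_covers {a b c d k : ℕ}
    (hab : a ≤ b) (hbc : b ≤ c) (hcd : c ≤ d) :
    (∃ p ∈ ({(a, c), (b, d)} : Set (ℕ × ℕ)), p.1 ≤ k ∧ k + 1 ≤ p.2) ↔
      (∃ p ∈ ({(a, d), (b, c)} : Set (ℕ × ℕ)), p.1 ≤ k ∧ k + 1 ≤ p.2) := by
  simp only [Set.exists_mem_insert, Set.mem_singleton_iff, exists_eq_left]
  omega

theorem crossing_nested_same_separators_general (a b c d : ℕ)
    (hab : a < b) (hbc : b ≤ c) (hcd : c < d) :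
    sep {(a, c), (b, d)} = sep {(a, d), (b, c)} := by
  refine sep_congr ?_ ?_ fun k => crossing_covers_iff_nested_covers hab.le hbc hcd.le
  · simp only [Set.image_pair]
  · simp only [Set.image_pair, Set.pair_comm]

theorem crossing_nested_same_separators (n a b c d : ℕ)
    (ha : 1 ≤ a) (hab : a < b) (hbc : b ≤ c) (hcd : c < d) (hdn : d ≤ n) :
    sep {(a, c), (b, d)} = sep {(a, d), (b, c)} :=
  crossing_nested_same_separators_general a b c d hab hbc hcd
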